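/- Let Ω ⊂ ℝ^r be compact. The Sliced 2-Wasserstein distance d_{SW_2} on probability measures on Ω is Hilbertian, with explicit feature map into F = L²((0,1) × S^{r−1}, λ¹ ⊗ σ) given by Φ(P)(t,θ) = F_{θ*_#P}^{[-1]}(t): for all probability measures P, Q on Ω, d_{SW_2}(P,Q)² = ∫_{S^{r−1}} ∫_0^1 (F_{θ*_#P}^{[-1]}(t) − F_{θ*_#Q}^{[-1]}(t))² dt dσ(θ) = ‖Φ(P) − Φ(Q)‖²_F. -/

import Mathlib

/-!
For `P` supported in the closed ball of radius `R`, every projection `θ*_#P` is supported in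
`[-R, R]`, so its quantile function takes values in `[-R, R]` on `(0, 1]`. Joint measurability
of `(t, θ) ↦ F_{θ*_#P}^{[-1]}(t)` comes from the Galois connection
`F^{[-1]}(t) ≤ x ↔ t ≤ F(x)` together with measurability of `θ ↦ F_{θ*_#P}(x)`. Hence `Φ(P)` is a
bounded measurable function on a finite measure space and lies in `L²`; the squared `L²`
distance of two features is the integral of the squared difference, which Fubini turns into the
iterated integral defining `d_{SW₂}²`.
-/

open MeasureTheory
open scoped RealInnerProductSpace

/-- The generalized inverse cumulative distribution function (quantile function) of a
probability measure `μ` on `ℝ`: `F_μ^{[-1]}(t) = inf {x : F_μ(x) ≥ t}` where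
`F_μ(x) = μ((−∞, x])`. -/
noncomputable def invCDF (μ : Measure ℝ) (t : ℝ) : ℝ :=
  sInf {x : ℝ | t ≤ (μ (Set.Iic x)).toReal}

/-- The uniform probability measure on the unit sphere `S^{r-1} ⊂ ℝ^r`
(the normalized surface measure). -/
noncomputable def uniformSphere (r : ℕ) :
    Measure (Metric.sphere (0 : EuclideanSpace ℝ (Fin r)) 1) :=
  ((volume : Measure (EuclideanSpace ℝ (Fin r))).toSphere Set.univ)⁻¹ •
    (volume : Measure (EuclideanSpace ℝ (Fin r))).toSphere

/-- The squared Sliced 2-Wasserstein distance between probability measures on `ℝ^r`: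
`d_{SW₂}(P,Q)² = ∫_{S^{r−1}} ∫_0^1 (F_{θ*_#P}^{[-1]}(t) − F_{θ*_#Q}^{[-1]}(t))² dt dσ(θ)`. -/
noncomputable def slicedW2Sq {r : ℕ} (P Q : Measure (EuclideanSpace ℝ (Fin r))) : ℝ :=
  ∫ θ : Metric.sphere (0 : EuclideanSpace ℝ (Fin r)) 1,
    (∫ t in Set.Ioc (0 : ℝ) 1,
      (invCDF (P.map fun x => ⟪x, (θ : EuclideanSpace ℝ (Fin r))⟫) t -
        invCDF (Q.map fun x => ⟪x, (θ : EuclideanSpace ℝ (Fin r))⟫) t) ^ 2) ∂(uniformSphere r)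

/-- The Sliced Wasserstein feature map sending a probability measure `P` on `ℝ^r` to the
function `(t, θ) ↦ F_{θ*_#P}^{[-1]}(t)` on `(0,1) × S^{r−1}`. -/
noncomputable def swFeature {r : ℕ} (P : Measure (EuclideanSpace ℝ (Fin r))) :
    ℝ × Metric.sphere (0 : EuclideanSpace ℝ (Fin r)) 1 → ℝ :=
  fun p => invCDF (P.map fun x => ⟪x, (p.2 : EuclideanSpace ℝ (Fin r))⟫) p.1

/-- The measure `λ¹ ⊗ σ` on `(0,1) × S^{r−1}`, where `λ¹` is Lebesgue measure restricted to
`(0,1)` and `σ` is the uniform probability measure on the sphere. -/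
noncomputable def swBaseMeasure (r : ℕ) :
    Measure (ℝ × Metric.sphere (0 : EuclideanSpace ℝ (Fin r)) 1) :=
  (volume.restrict (Set.Ioc (0 : ℝ) 1)).prod (uniformSphere r)

open Set ProbabilityTheory

section Quantile

variable (ν : Measure ℝ)

lemma bddBelow_setOf_le_cdf {t : ℝ} (ht : 0 < t) : BddBelow {x | t ≤ cdf ν x} := by
  obtain ⟨z, hz⟩ := ((tendsto_cdf_atBot ν).eventually (gt_mem_nhds ht)).exists
  exact ⟨z, fun x hx => le_of_not_gt fun hxz => (hx.trans (monotone_cdf ν hxz.le)).not_gt hz⟩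

variable [IsProbabilityMeasure ν]

lemma invCDF_eq_sInf_cdf (t : ℝ) : invCDF ν t = sInf {x | t ≤ cdf ν x} := by
  simp only [invCDF, cdf_eq_real, measureReal_def]

/-- Outside `(0, 1]` the set defining `invCDF` is `ℝ` or `∅`, where `sInf` takes the junk value
`0`; this makes the feature map measurable on all of `ℝ × S^{r-1}`. -/
lemma invCDF_of_notMem_Ioc {t : ℝ} (ht : t ∉ Ioc 0 1) : invCDF ν t = 0 := by
  rw [invCDF_eq_sInf_cdf]
  rcases not_and_or.1 ht with ht | ht
  · have : {x | t ≤ cdf ν x} = univ :=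
      eq_univ_of_forall fun x => (not_lt.1 ht).trans (cdf_nonneg ν x)
    rw [this]
    exact Real.sInf_of_not_bddBelow not_bddBelow_univ
  · have : {x | t ≤ cdf ν x} = ∅ :=
      eq_empty_of_forall_notMem fun x hx => ht (hx.trans (cdf_le_one ν x))
    rw [this, Real.sInf_empty]

lemma invCDF_le_iff {t : ℝ} (ht : 0 < t) (hne : ∃ y, t ≤ cdf ν y) (x : ℝ) :
    invCDF ν t ≤ x ↔ t ≤ cdf ν x := by
  rw [invCDF_eq_sInf_cdf]
  refine ⟨fun h => ?_, fun h => csInf_le (bddBelow_setOf_le_cdf ν ht) h⟩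
  have right_of_x : ∀ y > x, t ≤ cdf ν y := fun y hy => by
    obtain ⟨s, hs, hsy⟩ := (csInf_lt_iff (bddBelow_setOf_le_cdf ν ht) hne).1 (h.trans_lt hy)
    exact hs.trans (monotone_cdf ν hsy.le)
  exact ge_of_tendsto ((cdf ν).right_continuous x |>.mono Ioi_subset_Ici_self)
    (eventually_nhdsWithin_of_forall right_of_x)

variable {a b : ℝ}

lemma cdf_eq_one_of_measure_Icc (hν : ν (Icc a b) = 1) : cdf ν b = 1 := by
  have : ν (Iic b) = 1 := le_antisymm prob_le_one (hν ▸ measure_mono Icc_subset_Iic_self)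
  rw [cdf_eq_real, measureReal_def, this, ENNReal.toReal_one]

lemma cdf_eq_zero_of_measure_Icc (hν : ν (Icc a b) = 1) {x : ℝ} (hx : x < a) : cdf ν x = 0 := by
  have hcompl : ν (Icc a b)ᶜ = 0 := (prob_compl_eq_zero_iff measurableSet_Icc).2 hν
  have : ν (Iic x) = 0 :=
    measure_mono_null (fun y (hy : y ≤ x) (hy' : y ∈ Icc a b) => hy'.1.not_gt (hy.trans_lt hx))
      hcompl
  rw [cdf_eq_real, measureReal_def, this, ENNReal.toReal_zero]

lemma invCDF_mem_Icc (hν : ν (Icc a b) = 1) {t : ℝ} (ht : t ∈ Ioc 0 1) :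
    invCDF ν t ∈ Icc a b := by
  have hb : t ≤ cdf ν b := ht.2.trans (cdf_eq_one_of_measure_Icc ν hν).ge
  refine ⟨le_of_not_gt fun hlt => ?_, (invCDF_le_iff ν ht.1 ⟨b, hb⟩ b).2 hb⟩
  have := (invCDF_le_iff ν ht.1 ⟨b, hb⟩ _).1 le_rfl
  rw [cdf_eq_zero_of_measure_Icc ν hν hlt] at this
  exact this.not_gt ht.1

end Quantile

section Projection

variable {E : Type*} [NormedAddCommGroup E] [InnerProductSpace ℝ E] [MeasurableSpace E]
  [OpensMeasurableSpace E]

lemma measurable_inner_left (θ : E) : Measurable (⟪·, θ⟫) :=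
  (continuous_id.inner continuous_const).measurable

instance isProbabilityMeasure_map_inner (P : Measure E) [IsProbabilityMeasure P] (θ : E) :
    IsProbabilityMeasure (P.map (⟪·, θ⟫)) :=
  Measure.isProbabilityMeasure_map (measurable_inner_left θ).aemeasurable

lemma measure_map_inner_Icc_eq_one (P : Measure E) [IsProbabilityMeasure P] {R : ℝ}
    (hP : P (Metric.closedBall 0 R) = 1) {θ : E} (hθ : ‖θ‖ ≤ 1) :
    P.map (⟪·, θ⟫) (Icc (-R) R) = 1 := by
  rw [Measure.map_apply (measurable_inner_left θ) measurableSet_Icc]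
  refine le_antisymm prob_le_one (hP ▸ measure_mono fun y hy => ?_)
  rw [mem_closedBall_zero_iff] at hy
  refine abs_le.1 ((abs_real_inner_le_norm y θ).trans ?_)
  nlinarith [norm_nonneg y, norm_nonneg θ]

lemma measurable_cdf_map_inner [SecondCountableTopology E] (P : Measure E)
    [IsProbabilityMeasure P] (x : ℝ) : Measurable fun θ : E => cdf (P.map (⟪·, θ⟫)) x := by
  have hs : MeasurableSet {q : E × E | ⟪q.2, q.1⟫ ≤ x} :=
    measurableSet_le (continuous_snd.inner continuous_fst).measurable measurable_const
  convert (measurable_measure_prodMk_left (ν := P) hs).ennreal_toReal using 2 with θ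
  rw [cdf_eq_real, measureReal_def, Measure.map_apply (measurable_inner_left θ) measurableSet_Iic]
  rfl

end Projection

instance (r : ℕ) : IsFiniteMeasure (uniformSphere r) where
  measure_univ_lt_top := by
    rw [uniformSphere, Measure.smul_apply, smul_eq_mul]
    exact (ENNReal.inv_mul_le_one _).trans_lt ENNReal.one_lt_top

instance : IsFiniteMeasure (volume.restrict (Ioc (0 : ℝ) 1)) :=
  isFiniteMeasure_restrict.2 measure_Ioc_lt_top.ne

instance (r : ℕ) : IsFiniteMeasure (swBaseMeasure r) := by
  unfold swBaseMeasure; infer_instance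

section Feature

variable {r : ℕ} (P : Measure (EuclideanSpace ℝ (Fin r))) [IsProbabilityMeasure P] {R : ℝ}

local notation "S" => Metric.sphere (0 : EuclideanSpace ℝ (Fin r)) 1

lemma swFeature_le_iff (hP : P (Metric.closedBall 0 R) = 1) {t : ℝ} (ht : t ∈ Ioc 0 1)
    (θ : S) (x : ℝ) :
    swFeature P (t, θ) ≤ x ↔ t ≤ cdf (P.map (⟪·, (θ : EuclideanSpace ℝ (Fin r))⟫)) x := by
  have hsupp := measure_map_inner_Icc_eq_one P hP (norm_eq_of_mem_sphere θ).le
  exact invCDF_le_iff _ ht.1 ⟨R, ht.2.trans (cdf_eq_one_of_measure_Icc _ hsupp).ge⟩ x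

lemma measurable_swFeature (hP : P (Metric.closedBall 0 R) = 1) : Measurable (swFeature P) := by
  refine measurable_of_Iic fun x => ?_
  have : swFeature P ⁻¹' Iic x = (Prod.fst ⁻¹' Ioc 0 1).ite
      {p : ℝ × S | p.1 ≤ cdf (P.map (⟪·, (p.2 : EuclideanSpace ℝ (Fin r))⟫)) x} {_p | 0 ≤ x} := by
    ext ⟨t, θ⟩
    by_cases ht : t ∈ Ioc 0 1
    · simp [Set.ite, ht, swFeature_le_iff P hP ht]
    · simp [Set.ite, ht, swFeature, invCDF_of_notMem_Ioc _ ht]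
  rw [this]
  exact (measurableSet_Ioc.preimage measurable_fst).ite
    (measurableSet_le measurable_fst
      (((measurable_cdf_map_inner P x).comp measurable_subtype_coe).comp measurable_snd))
    (MeasurableSet.const _)

lemma abs_swFeature_le (hR : 0 ≤ R) (hP : P (Metric.closedBall 0 R) = 1)
    (p : ℝ × S) : |swFeature P p| ≤ R := by
  by_cases ht : p.1 ∈ Ioc 0 1
  · exact abs_le.2 <| invCDF_mem_Icc _
      (measure_map_inner_Icc_eq_one P hP (norm_eq_of_mem_sphere p.2).le) ht
  · rwa [swFeature, invCDF_of_notMem_Ioc _ ht, abs_zero]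

lemma memLp_swFeature (hR : 0 ≤ R) (hP : P (Metric.closedBall 0 R) = 1) :
    MemLp (swFeature P) 2 (swBaseMeasure r) :=
  .of_bound (measurable_swFeature P hP).aestronglyMeasurable R
    (ae_of_all _ (abs_swFeature_le P hR hP))

end Feature

lemma norm_toLp_sub_toLp_sq {α : Type*} [MeasurableSpace α] {μ : Measure α} {f g : α → ℝ}
    (hf : MemLp f 2 μ) (hg : MemLp g 2 μ) :
    ‖hf.toLp f - hg.toLp g‖ ^ 2 = ∫ a, (f a - g a) ^ 2 ∂μ := by
  rw [← MemLp.toLp_sub, ← real_inner_self_eq_norm_sq, L2.inner_def]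
  refine integral_congr_ae ((hf.sub hg).coeFn_toLp.mono fun a ha => ?_)
  simp only [ha, Pi.sub_apply, real_inner_self_eq_norm_sq, Real.norm_eq_abs, sq_abs]

lemma prob_eq_one_of_subset {α : Type*} [MeasurableSpace α] {P : Measure α}
    [IsProbabilityMeasure P] {s t : Set α} (hs : P s = 1) (hst : s ⊆ t) : P t = 1 :=
  le_antisymm prob_le_one (hs ▸ measure_mono hst)

/-- **The Sliced 2-Wasserstein distance is Hilbertian**, with explicit feature map
`Φ(P)(t,θ) = F_{θ*_#P}^{[-1]}(t)` into the Hilbert space `F = L²((0,1) × S^{r−1}, λ¹ ⊗ σ)`: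
for all probability measures `P, Q` on a compact set `Ω ⊂ ℝ^r`, the feature functions are
square-integrable and
`d_{SW₂}(P,Q)² = ∫_{S^{r−1}} ∫_0^1 (F_{θ*_#P}^{[-1]}(t) − F_{θ*_#Q}^{[-1]}(t))² dt dσ(θ)
  = ‖Φ(P) − Φ(Q)‖²_F`. -/
theorem slicedW2_hilbertian {r : ℕ} (Ω : Set (EuclideanSpace ℝ (Fin r))) (hΩ : IsCompact Ω) :
    ∀ P Q : Measure (EuclideanSpace ℝ (Fin r)),
      IsProbabilityMeasure P → IsProbabilityMeasure Q → P Ω = 1 → Q Ω = 1 →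
      ∃ (hP : MemLp (swFeature P) 2 (swBaseMeasure r))
        (hQ : MemLp (swFeature Q) 2 (swBaseMeasure r)),
        slicedW2Sq P Q = ‖hP.toLp (swFeature P) - hQ.toLp (swFeature Q)‖ ^ 2 := by
  intro P Q _ _ hPΩ hQΩ
  obtain ⟨R, hR, hΩR⟩ := hΩ.isBounded.subset_closedBall_lt 0 0
  have hP := memLp_swFeature P hR.le (prob_eq_one_of_subset hPΩ hΩR)
  have hQ := memLp_swFeature Q hR.le (prob_eq_one_of_subset hQΩ hΩR)
  refine ⟨hP, hQ, ?_⟩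
  rw [norm_toLp_sub_toLp_sq]
  exact (integral_prod_symm _ (hP.sub hQ).integrable_sq).symm
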